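/- Fix m ≥ 5, a ∈ [0,1), and suppose n_v(n) ≥ n, r_max(n) ≥ 2, r_ave(n) ≤ r_max(n), and n_v(n)·r_max(n) ≤ C·n·(log₂ n)^a for all large n. Then the function N(n) = n·( ((m-4)/2)·log₂ n - m·log₂(r_max(n) + r_max(n)²) ) / ( n_v(n)·r_max(n) + 2·(n_v(n) - n)·log₂ r_max(n) ) satisfies N(n) = Ω((log n)^{1-a}). -/
import Mathlib


set_option maxHeartbeats 1000000

/-- Theorem 4.3 asymptotics: with `m ≥ 5`, `0 ≤ a < 1`, `n_v(n) ≥ n`, `r_max(n) ≥ 2`,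
`r_ave(n) ≤ r_max(n)`, and `n_v(n)·r_max(n) ≤ C·n·(log₂ n)^a` for large `n`, the function
`N(n) = n·(((m-4)/2)·log₂ n - m·log₂(r_max + r_max²)) / (n_v·r_max + 2(n_v - n)·log₂ r_max)`
is `Ω((log n)^{1-a})`. -/
theorem teleportation_depth_lower_bound (m : ℕ) (hm : 5 ≤ m) (a C : ℝ)
    (ha : 0 ≤ a) (ha1 : a < 1) (hC : 0 < C) (nv rmax rave : ℕ → ℝ)
    (hyp : ∃ N₁ : ℕ, 2 ≤ N₁ ∧ ∀ n : ℕ, N₁ ≤ n →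
      (n : ℝ) ≤ nv n ∧ 2 ≤ rmax n ∧ rave n ≤ rmax n ∧
      nv n * rmax n ≤ C * (n : ℝ) * (Real.logb 2 (n : ℝ)) ^ a) :
    ∃ c : ℝ, 0 < c ∧ ∃ N₀ : ℕ, ∀ n : ℕ, N₀ ≤ n →
      c * (Real.logb 2 (n : ℝ)) ^ (1 - a) ≤
        (n : ℝ) * (((m : ℝ) - 4) / 2 * Real.logb 2 (n : ℝ)
            - (m : ℝ) * Real.logb 2 (rmax n + (rmax n) ^ 2))
          / (nv n * rmax n + 2 * (nv n - (n : ℝ)) * Real.logb 2 (rmax n)) := by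
  obtain ⟨N₁, hN₁2, hN₁⟩ := hyp
  have hm4 : (1:ℝ) ≤ (m:ℝ) - 4 := by
    have : (5:ℝ) ≤ (m:ℝ) := by exact_mod_cast hm
    linarith
  have hmpos : (0:ℝ) < (m:ℝ) := by linarith
  set K : ℝ := 1 + 2 * Real.logb 2 C with hK
  have tendstoL : Filter.Tendsto (fun n : ℕ => Real.logb 2 (n:ℝ)) Filter.atTop Filter.atTop :=
    (Real.tendsto_logb_atTop one_lt_two).comp tendsto_natCast_atTop_atTop
  have hlogb : (fun x : ℝ => Real.logb 2 x) =o[Filter.atTop] (fun x : ℝ => x) := by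
    have h := Real.isLittleO_log_id_atTop
    have heq : (fun x : ℝ => Real.logb 2 x) = fun x => (Real.log 2)⁻¹ * Real.log x := by
      funext x; rw [Real.logb]; ring
    rw [heq]
    exact h.const_mul_left _
  have hε : (0:ℝ) < ((m:ℝ) - 4) / (16 * m) := by positivity
  have hP : ∀ᶠ x : ℝ in Filter.atTop,
      (m:ℝ) * (K + 2 * Real.logb 2 x) ≤ (((m:ℝ) - 4) / 4) * x := by
    filter_upwards [hlogb.def hε,
      Filter.eventually_ge_atTop (8 * (m:ℝ) * |K| / ((m:ℝ) - 4)),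
      Filter.eventually_ge_atTop (0:ℝ)] with x h1 h2 h0
    have hb : Real.logb 2 x ≤ ((m:ℝ) - 4) / (16 * m) * x := by
      have habs : Real.logb 2 x ≤ |Real.logb 2 x| := le_abs_self _
      rw [Real.norm_eq_abs, Real.norm_eq_abs, abs_of_nonneg h0] at h1
      linarith
    have h2' : 8 * (m:ℝ) * |K| ≤ x * ((m:ℝ) - 4) := by
      rw [div_le_iff₀ (by linarith)] at h2; exact h2
    have hKabs : K ≤ |K| := le_abs_self K
    have hmul : (2 * (m:ℝ)) * (((m:ℝ) - 4) / (16 * m) * x) = ((m:ℝ) - 4) / 8 * x := by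
      field_simp; ring
    nlinarith [mul_le_mul_of_nonneg_left hb (by linarith : (0:ℝ) ≤ 2 * (m:ℝ))]
  have hPn := tendstoL.eventually hP
  have hL1 := tendstoL.eventually_ge_atTop 1
  have main : ∀ᶠ n : ℕ in Filter.atTop,
      ((m:ℝ) - 4) / (20 * C) * (Real.logb 2 (n:ℝ)) ^ (1 - a) ≤
        (n : ℝ) * (((m : ℝ) - 4) / 2 * Real.logb 2 (n : ℝ)
            - (m : ℝ) * Real.logb 2 (rmax n + (rmax n) ^ 2))
          / (nv n * rmax n + 2 * (nv n - (n : ℝ)) * Real.logb 2 (rmax n)) := by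
    filter_upwards [Filter.eventually_ge_atTop N₁, Filter.eventually_ge_atTop 1, hPn, hL1]
      with n hn hn1 hPn hL1
    obtain ⟨hnv, hr2, -, hbound⟩ := hN₁ n hn
    set L := Real.logb 2 (n:ℝ) with hLdef
    set r := rmax n with hrdef
    set v := nv n with hvdef
    have hLpos : (0:ℝ) < L := by linarith
    have hnn : (0:ℝ) < (n:ℝ) := by exact_mod_cast Nat.lt_of_lt_of_le Nat.zero_lt_one hn1
    have hv : (0:ℝ) < v := lt_of_lt_of_le hnn hnv
    have hrpos : (0:ℝ) < r := by linarith
    have hLa : (0:ℝ) < L ^ a := Real.rpow_pos_of_pos hLpos a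
    -- r ≤ C * L^a
    have hrC : r ≤ C * L ^ a := by
      have h1 : (n:ℝ) * r ≤ v * r := mul_le_mul_of_nonneg_right hnv hrpos.le
      have h2 : (n:ℝ) * r ≤ (n:ℝ) * (C * L ^ a) := by
        calc (n:ℝ) * r ≤ C * (n:ℝ) * L ^ a := h1.trans hbound
        _ = (n:ℝ) * (C * L ^ a) := by ring
      exact le_of_mul_le_mul_left h2 hnn
    -- logb bounds on r
    have hlbr1 : (1:ℝ) ≤ Real.logb 2 r := by
      have := (Real.logb_le_logb one_lt_two two_pos hrpos).mpr hr2
      rwa [Real.logb_self_eq_one one_lt_two] at this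
    have hlog2pos : (0:ℝ) < Real.log 2 := Real.log_pos one_lt_two
    have hlbr_le : Real.logb 2 r ≤ 2 * r := by
      have h := Real.log_le_sub_one_of_pos hrpos
      rw [Real.logb, div_le_iff₀ hlog2pos]
      nlinarith [Real.log_two_gt_d9]
    -- denominator
    have hvn : (0:ℝ) ≤ v - (n:ℝ) := by linarith
    have hlbpos : (0:ℝ) < Real.logb 2 r := by linarith
    have hDpos : (0:ℝ) < v * r + 2 * (v - (n:ℝ)) * Real.logb 2 r := by
      have := mul_pos hv hrpos
      have := mul_nonneg hvn hlbpos.le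
      linarith
    have hDle : v * r + 2 * (v - (n:ℝ)) * Real.logb 2 r ≤ 5 * (C * (n:ℝ) * L ^ a) := by
      have s1 : (v - (n:ℝ)) * Real.logb 2 r ≤ v * Real.logb 2 r :=
        mul_le_mul_of_nonneg_right (by linarith) hlbpos.le
      have s2 : v * Real.logb 2 r ≤ v * (2 * r) :=
        mul_le_mul_of_nonneg_left hlbr_le hv.le
      nlinarith [hbound]
    -- numerator
    have hlogL0 : (0:ℝ) ≤ Real.logb 2 L := by
      have := (Real.logb_le_logb one_lt_two one_pos hLpos).mpr hL1
      simpa using this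
    have hnum : ((m:ℝ) - 4) / 4 * L ≤
        ((m:ℝ) - 4) / 2 * L - (m:ℝ) * Real.logb 2 (r + r ^ 2) := by
      have ha1' : r + r ^ 2 ≤ 2 * r ^ 2 := by
        have : r * 1 ≤ r * r := mul_le_mul_of_nonneg_left (by linarith) (by linarith)
        rw [pow_two]; linarith
      have h2 : Real.logb 2 (r + r ^ 2) ≤ Real.logb 2 (2 * r ^ 2) := by
        exact (Real.logb_le_logb one_lt_two (by positivity) (by positivity)).mpr ha1'
      have h3 : Real.logb 2 (2 * r ^ 2) = 1 + 2 * Real.logb 2 r := by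
        rw [Real.logb_mul two_ne_zero (by positivity), Real.logb_self_eq_one one_lt_two,
          Real.logb_pow]
        norm_num
      have h4 : Real.logb 2 r ≤ Real.logb 2 (C * L ^ a) := by
        exact (Real.logb_le_logb one_lt_two hrpos (by positivity)).mpr hrC
      have h5 : Real.logb 2 (C * L ^ a) = Real.logb 2 C + a * Real.logb 2 L := by
        rw [Real.logb_mul (ne_of_gt hC) (ne_of_gt hLa)]
        simp only [Real.logb]
        rw [Real.log_rpow hLpos]
        ring
      have h6 : a * Real.logb 2 L ≤ Real.logb 2 L := by nlinarith
      have h7 : Real.logb 2 (r + r ^ 2) ≤ K + 2 * Real.logb 2 L := by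
        rw [hK]; linarith
      have h8 : (m:ℝ) * Real.logb 2 (r + r ^ 2) ≤ (m:ℝ) * (K + 2 * Real.logb 2 L) :=
        mul_le_mul_of_nonneg_left h7 hmpos.le
      have h9 : (m:ℝ) * Real.logb 2 (r + r ^ 2) ≤ ((m:ℝ) - 4) / 4 * L := h8.trans hPn
      linarith [h9]
    -- final
    have key : ((m:ℝ) - 4) / (20 * C) * L ^ (1 - a) =
        ((n:ℝ) * (((m:ℝ) - 4) / 4 * L)) / (5 * (C * (n:ℝ) * L ^ a)) := by
      rw [Real.rpow_sub hLpos, Real.rpow_one]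
      field_simp
      ring
    rw [key]
    have hnum0 : (0:ℝ) ≤ ((m:ℝ) - 4) / 4 * L := mul_nonneg (by linarith) hLpos.le
    have hmono : (n:ℝ) * (((m:ℝ) - 4) / 4 * L) ≤
        (n:ℝ) * (((m:ℝ) - 4) / 2 * L - (m:ℝ) * Real.logb 2 (r + r ^ 2)) :=
      mul_le_mul_of_nonneg_left hnum hnn.le
    apply div_le_div₀
    · exact le_trans (mul_nonneg hnn.le hnum0) hmono
    · exact hmono
    · exact hDpos
    · exact hDle
  obtain ⟨N₀, hN₀⟩ := Filter.eventually_atTop.mp main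
  exact ⟨((m:ℝ) - 4) / (20 * C), by positivity, N₀, hN₀⟩
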